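/- Fix any linear order on the set of indecomposable permutations and, for n ≥ 1, let ℓ_n be the number of permutations of size exactly n whose word of indecomposable blocks is a Lyndon word over this ordered alphabet. Then the identity of formal power series ∏_{n≥1} (1−x^n)^{−ℓ_n} = Σ_{n≥0} n!·x^n holds. -/

import Mathlib

open Equiv MeasureTheory

/-- A permutation of size `n` together with its size. -/
abbrev PermSig := Σ n : ℕ, Equiv.Perm (Fin n)

/-- The direct sum of two permutations. -/
def permDirectSum {m n : ℕ} (π₁ : Equiv.Perm (Fin m)) (π₂ : Equiv.Perm (Fin n)) :
    Equiv.Perm (Fin (m + n)) :=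
  Equiv.permCongr finSumFinEquiv (Equiv.sumCongr π₁ π₂)

def sigSum (p q : PermSig) : PermSig := ⟨p.1 + q.1, permDirectSum p.2 q.2⟩

/-- Direct sum of a list of permutations. -/
def sigSumList : List PermSig → PermSig
  | [] => ⟨0, 1⟩
  | [p] => p
  | p :: q :: l => sigSum p (sigSumList (q :: l))

/-- A permutation is decomposable if it is a direct sum of two permutations
(each of size at least `1`). -/
def IsDecomposable {n : ℕ} (π : Equiv.Perm (Fin n)) : Prop :=
  ∃ (a b : ℕ) (_ : 0 < a) (_ : 0 < b) (h : a + b = n)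
    (π₁ : Equiv.Perm (Fin a)) (π₂ : Equiv.Perm (Fin b)),
    π = Equiv.permCongr (finCongr h) (permDirectSum π₁ π₂)

def IsIndecomposable {n : ℕ} (π : Equiv.Perm (Fin n)) : Prop :=
  1 ≤ n ∧ ¬ IsDecomposable π

/-- The alphabet `Σ` of indecomposable permutations. -/
def Indec : Type := {p : PermSig // IsIndecomposable p.2}

/-- `l` is the word of indecomposable blocks of `π`. -/
def IsBlockDecomposition {n : ℕ} (π : Equiv.Perm (Fin n)) (l : List Indec) : Prop :=
  sigSumList (l.map Subtype.val) = ⟨n, π⟩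

/-- The sequence of values of a permutation. -/
def permWord {n : ℕ} (π : Equiv.Perm (Fin n)) : List ℕ :=
  (List.finRange n).map fun i => (π i : ℕ)

/-- The order on the alphabet of indecomposable permutations: smaller sizes first,
permutations of the same size ordered lexicographically as sequences of values. -/
def sigLt (p q : PermSig) : Prop :=
  p.1 < q.1 ∨ (p.1 = q.1 ∧ List.Lex (· < ·) (permWord p.2) (permWord q.2))

def indecLt (p q : Indec) : Prop := sigLt p.1 q.1

/-- A nonempty word is Lyndon if no proper nonempty suffix of it is smaller
(w.r.t. the lexicographic order induced by `r`) than the word itself. -/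
def IsLyndonWord {α : Type*} (r : α → α → Prop) (w : List α) : Prop :=
  w ≠ [] ∧ ∀ i, 0 < i → i < w.length → ¬ List.Lex r (w.drop i) w

/-- A permutation is Lyndon w.r.t. an order `r` on indecomposable permutations
if its word of indecomposable blocks is a Lyndon word. -/
def IsLyndonPermWrt (r : Indec → Indec → Prop) {n : ℕ} (π : Equiv.Perm (Fin n)) : Prop :=
  ∃ l : List Indec, IsBlockDecomposition π l ∧ IsLyndonWord r l

def IsLyndonPerm {n : ℕ} (π : Equiv.Perm (Fin n)) : Prop := IsLyndonPermWrt indecLt π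

/-- `π <_L π'`: the word of blocks of `π` is lexicographically smaller than that of `π'`. -/
def permLtL (p q : PermSig) : Prop :=
  ∃ lp lq : List Indec, IsBlockDecomposition p.2 lp ∧ IsBlockDecomposition q.2 lq ∧
    List.Lex indecLt lp lq

def permLeL (p q : PermSig) : Prop :=
  ∃ lp lq : List Indec, IsBlockDecomposition p.2 lp ∧ IsBlockDecomposition q.2 lq ∧
    (lp = lq ∨ List.Lex indecLt lp lq)

/-- The pattern induced by the set `S` in `σ` is `τ`. -/
def IsPatternOf {N m : ℕ} (σ : Equiv.Perm (Fin N)) (S : Finset (Fin N))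
    (τ : Equiv.Perm (Fin m)) : Prop :=
  ∃ h : S.card = m, ∀ i j : Fin m,
    τ i < τ j ↔ σ (S.orderEmbOfFin h i) < σ (S.orderEmbOfFin h j)

/-- A permuton is a Borel probability measure on `[0,1]²` with uniform marginals. -/
structure Permuton where
  μ : Measure (ℝ × ℝ)
  prob : IsProbabilityMeasure μ
  marg_fst : ∀ a b : ℝ, 0 ≤ a → a ≤ b → b ≤ 1 →
    μ (Set.Icc a b ×ˢ Set.Icc (0:ℝ) 1) = ENNReal.ofReal (b - a)
  marg_snd : ∀ a b : ℝ, 0 ≤ a → a ≤ b → b ≤ 1 →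
    μ (Set.Icc (0:ℝ) 1 ×ˢ Set.Icc a b) = ENNReal.ofReal (b - a)

/-- The density of a pattern `σ` in a permuton `P`: the probability that `n` points
sampled independently from `P`, sorted by their first coordinates, have their second
coordinates ordered according to `σ`. -/
noncomputable def permutonDensity {n : ℕ} (σ : Equiv.Perm (Fin n)) (P : Permuton) : ℝ :=
  haveI := P.prob
  ((Measure.pi fun _ : Fin n => P.μ)
    {p : Fin n → ℝ × ℝ | ∃ e : Equiv.Perm (Fin n),
      (∀ i j : Fin n, i < j → (p (e i)).1 < (p (e j)).1) ∧
      (∀ i j : Fin n, σ i < σ j ↔ (p (e i)).2 < (p (e j)).2)}).toReal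

/-!
Every permutation is the direct sum of a unique word of indecomposable blocks, so the
permutations of size `N` are the words over the alphabet of indecomposable permutations of total
size `N`, and there are `N!` of them. By the Chen–Fox–Lyndon theorem, for any linear order on the
alphabet each word is uniquely a nonincreasing concatenation of Lyndon words, so these words are
in bijection with the multisets of Lyndon words of total size `N`. Finally, multisets of objects
with `ℓ_n` objects of size `n` are counted by `∏ (1 - x^n)^{-ℓ_n}`.
-/

namespace List

section

variable {α : Type*} {s : List α}

theorem exists_isSuffix_isPrefix_of_isPrefix_flatten {L : List (List α)} (hs : s <+: L.flatten)
    (hne : s ≠ []) : ∃ x ∈ L, ∃ t, t ≠ [] ∧ t <:+ s ∧ t <+: x := by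
  induction L generalizing s with
  | nil => exact absurd (prefix_nil.mp hs) hne
  | cons u L ih =>
    obtain ⟨r, hr⟩ := hs
    rcases append_eq_append_iff.mp (flatten_cons ▸ hr) with ⟨a, hu, -⟩ | ⟨b, rfl, hL⟩
    · exact ⟨u, mem_cons_self, s, hne, suffix_refl s, ⟨a, hu.symm⟩⟩
    rcases eq_or_ne b [] with rfl | hb
    · exact ⟨u, mem_cons_self, u ++ [], hne, suffix_refl _, by simp⟩
    obtain ⟨x, hx, t, ht, htb, htx⟩ := ih ⟨r, hL.symm⟩ hb
    exact ⟨x, mem_cons_of_mem u hx, t, ht, htb.trans (suffix_append u b), htx⟩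

end

variable {α : Type*} [LinearOrder α] {s t u v w : List α}

theorem lt_append_of_ne_nil (u : List α) (ht : t ≠ []) : u < u ++ t :=
  List.lt_iff_exists.mpr (Or.inl ⟨by simp, by simpa using length_pos_iff.mpr ht⟩)

theorem IsPrefix.lt_of_ne (h : u <+: v) (hne : u ≠ v) : u < v := by
  obtain ⟨t, rfl⟩ := h
  exact lt_append_of_ne_nil u fun ht => hne (by simp [ht])

theorem append_lt_append_of_lt_of_not_isPrefix (h : u < v) (hp : ¬ u <+: v) (s t : List α) :
    u ++ s < v ++ t := by
  induction h with
  | nil => exact absurd nil_prefix hp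
  | rel hab => exact Lex.rel hab
  | cons _ ih => exact Lex.cons (ih fun h => hp (cons_prefix_cons.mpr ⟨rfl, h⟩))

end List

section Lyndon

open List

variable {α : Type*} [LinearOrder α] {s t u v w : List α}

theorem isLyndonWord_iff :
    IsLyndonWord (· < ·) w ↔ w ≠ [] ∧ ∀ s, s <:+ w → s ≠ [] → s ≠ w → w < s := by
  refine ⟨fun ⟨hw, h⟩ => ⟨hw, fun s ⟨t, hts⟩ hs hsw => ?_⟩, fun ⟨hw, h⟩ => ⟨hw, fun i hi hiw => ?_⟩⟩
  · subst hts
    have ht : t ≠ [] := by rintro rfl; exact hsw rfl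
    have := h t.length (length_pos_iff.mpr ht) (by simpa using length_pos_iff.mpr hs)
    rw [drop_left] at this
    exact lt_of_le_of_ne (not_lt.mp this) (Ne.symm hsw)
  · refine not_lt.mpr (h _ (drop_suffix i w) ?_ ?_).le <;>
      · intro h; have := congrArg length h; simp at this; omega

theorem IsLyndonWord.lt_of_isSuffix (hw : IsLyndonWord (· < ·) w) (hs : s <:+ w) (hne : s ≠ [])
    (hsw : s ≠ w) : w < s :=
  (isLyndonWord_iff.mp hw).2 s hs hne hsw

theorem isLyndonWord_singleton (a : α) : IsLyndonWord (· < ·) [a] :=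
  ⟨cons_ne_nil a [], fun i hi hi1 => absurd hi1 (by simp; omega)⟩

theorem IsLyndonWord.append (hu : IsLyndonWord (· < ·) u) (hv : IsLyndonWord (· < ·) v)
    (huv : u < v) : IsLyndonWord (· < ·) (u ++ v) := by
  have hu0 : u ≠ [] := hu.1
  have huvv : u ++ v < v := by
    by_cases hp : u <+: v
    · obtain ⟨t, ht⟩ := hp
      have ht0 : t ≠ [] := by rintro rfl; simp [← ht] at huv
      have htv : t ≠ v := fun h => hu0 (by simpa [← h] using congrArg length ht)
      have := append_left_lt (l₁ := u) (hv.lt_of_isSuffix ⟨u, ht⟩ ht0 htv)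
      rwa [ht] at this
    · simpa using append_lt_append_of_lt_of_not_isPrefix huv hp v []
  refine isLyndonWord_iff.mpr ⟨by simp [hu0], fun s ⟨t, hts⟩ hs hsuv => ?_⟩
  rcases append_eq_append_iff.mp hts with ⟨r, hr, hs'⟩ | ⟨r, hr, hv'⟩
  · subst hr hs'
    have ht0 : t ≠ [] := by rintro rfl; exact hsuv rfl
    rcases eq_or_ne r [] with rfl | hr0
    · exact huvv
    have hru : r.length < (t ++ r).length := by simpa using length_pos_iff.mpr ht0
    have hnp : ¬ t ++ r <+: r := fun hp => absurd hp.length_le (not_le.mpr hru)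
    exact append_lt_append_of_lt_of_not_isPrefix
      (hu.lt_of_isSuffix (suffix_append t r) hr0 (fun h => hru.ne (congrArg length h))) hnp v v
  · rcases eq_or_ne s v with h | h
    · rwa [h]
    · exact huvv.trans (hv.lt_of_isSuffix ⟨r, hv'.symm⟩ hs h)

variable (α) in
abbrev LyndonWord : Type _ := {w : List α // IsLyndonWord (· < ·) w}

namespace LyndonWord

theorem exists_sortedGE_flatten_eq_append (x : LyndonWord α) {M : List (LyndonWord α)}
    (hM : M.SortedGE) : ∃ L : List (LyndonWord α),
      L.SortedGE ∧ (L.map Subtype.val).flatten = x.1 ++ (M.map Subtype.val).flatten := by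
  induction M generalizing x with
  | nil => exact ⟨[x], by simp [sortedGE_iff_isChain], by simp⟩
  | cons y M ih =>
    by_cases hyx : y ≤ x
    · exact ⟨x :: y :: M, sortedGE_iff_isChain.mpr
        (isChain_cons_cons.mpr ⟨hyx, sortedGE_iff_isChain.mp hM⟩), by simp⟩
    · obtain ⟨L, hL, hflat⟩ := ih ⟨x.1 ++ y.1, x.2.append y.2 (not_le.mp hyx)⟩
        hM.pairwise.of_cons.sortedGE
      exact ⟨L, hL, by rw [hflat, map_cons, flatten_cons, append_assoc]⟩

theorem exists_sortedGE_flatten_eq (w : List α) :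
    ∃ L : List (LyndonWord α), L.SortedGE ∧ (L.map Subtype.val).flatten = w := by
  induction w with
  | nil => exact ⟨[], by simp [sortedGE_iff_isChain], rfl⟩
  | cons a w ih =>
    obtain ⟨M, hM, rfl⟩ := ih
    exact exists_sortedGE_flatten_eq_append ⟨[a], isLyndonWord_singleton a⟩ hM

theorem length_le_of_isPrefix_flatten {u : LyndonWord α} {L : List (LyndonWord α)}
    (hL : (u :: L).SortedGE) {v : List α} (hv : IsLyndonWord (· < ·) v)
    (hpre : v <+: ((u :: L).map Subtype.val).flatten) : v.length ≤ u.1.length := by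
  by_contra! hlen
  obtain ⟨v', rfl⟩ := prefix_of_prefix_length_le (by simp) hpre hlen.le
  have hv' : v' ≠ [] := by rintro rfl; simp at hlen
  obtain ⟨x, hx, t, ht, htv', htx⟩ := exists_isSuffix_isPrefix_of_isPrefix_flatten
    ((prefix_append_right_inj u.1).mp (by simpa using hpre)) hv'
  obtain ⟨y, hy, rfl⟩ := mem_map.mp hx
  have hvt : u.1 ++ v' < t := hv.lt_of_isSuffix (htv'.trans (suffix_append _ _)) ht fun h =>
    u.2.1 (by simpa [h] using htv'.length_le)
  have hty : t ≤ y.1 := (eq_or_ne t y.1).elim (·.le) fun h => (htx.lt_of_ne h).le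
  have hyu : y ≤ u := (sortedGE_iff_pairwise.mp hL |> pairwise_cons.mp).1 y hy
  exact (hvt.trans_le (hty.trans hyu)).not_ge (lt_append_of_ne_nil u.1 hv').le

theorem eq_of_sortedGE_of_flatten_eq {L M : List (LyndonWord α)} (hL : L.SortedGE)
    (hM : M.SortedGE) (h : (L.map Subtype.val).flatten = (M.map Subtype.val).flatten) :
    L = M := by
  induction L generalizing M with
  | nil =>
    cases M with
    | nil => rfl
    | cons v M => exact absurd h.symm (by simp [v.2.1])
  | cons u L ih =>
    cases M with
    | nil => exact absurd h (by simp [u.2.1])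
    | cons v M =>
      have hu : u.1 <+: ((u :: L).map Subtype.val).flatten := by simp
      have hv : v.1 <+: ((u :: L).map Subtype.val).flatten := by rw [h]; simp
      have hvu := length_le_of_isPrefix_flatten hL v.2 hv
      have huv := length_le_of_isPrefix_flatten hM u.2 (h ▸ hu)
      have : u = v := Subtype.ext <| (prefix_of_prefix_length_le hu hv huv).eq_of_length (by omega)
      subst this
      simp only [map_cons, flatten_cons, append_cancel_left_eq] at h
      rw [ih hL.pairwise.of_cons.sortedGE hM.pairwise.of_cons.sortedGE h]

/-- The Chen–Fox–Lyndon factorization. -/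
theorem bijective_flatten_sort :
    Function.Bijective fun m : Multiset (LyndonWord α) =>
      ((m.sort (· ≥ ·)).map Subtype.val).flatten := by
  refine ⟨fun m m' h => ?_, fun w => ?_⟩
  · rw [← m.sort_eq (· ≥ ·), ← m'.sort_eq (· ≥ ·),
      eq_of_sortedGE_of_flatten_eq (m.pairwise_sort _).sortedGE (m'.pairwise_sort _).sortedGE h]
  · obtain ⟨L, hL, rfl⟩ := exists_sortedGE_flatten_eq w
    have hsort : Multiset.sort (L : Multiset (LyndonWord α)) (· ≥ ·) = L :=
      Perm.eq_of_sortedGE (Multiset.pairwise_sort _ _).sortedGE hL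
        (Multiset.coe_eq_coe.mp (Multiset.sort_eq _ _))
    exact ⟨L, by simp only [hsort]⟩

theorem sum_map_flatten_sort {M : Type*} [AddCommMonoid M] (f : α → M)
    (m : Multiset (LyndonWord α)) :
    ((((m.sort (· ≥ ·)).map Subtype.val).flatten).map f).sum =
      (m.map fun x => (x.1.map f).sum).sum := by
  conv_rhs => rw [← m.sort_eq (· ≥ ·)]
  rw [Multiset.map_coe, Multiset.sum_coe, List.map_flatten, List.sum_flatten, List.map_map,
    List.map_map]
  rfl

theorem card_multisets_eq_card_words (f : α → ℕ) (N : ℕ) :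
    Nat.card {m : Multiset (LyndonWord α) // (m.map fun x => (x.1.map f).sum).sum = N} =
      Nat.card {w : List α // (w.map f).sum = N} :=
  Nat.card_congr ((Equiv.ofBijective _ bijective_flatten_sort).subtypeEquiv fun m => by
    rw [Equiv.ofBijective_apply, sum_map_flatten_sort])

end LyndonWord

end Lyndon

namespace Multiset

variable {β : Type*} [DecidableEq β]

theorem sum_map_eq_sum_mul_count {m : Multiset β} {s : Finset β} (hm : ∀ b ∈ m, b ∈ s)
    (wt : β → ℕ) : (m.map wt).sum = ∑ b ∈ s, wt b * m.count b := by
  rw [Finset.sum_multiset_map_count]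
  simp_rw [smul_eq_mul, mul_comm (count _ m)]
  exact Finset.sum_subset (fun b hb => hm b (mem_toFinset.mp hb))
    fun b _ hb => by simp [count_eq_zero.mpr (mt mem_toFinset.mpr hb)]

theorem count_sum_replicate (s : Finset β) (f : β → ℕ) (b : β) :
    count b (∑ i ∈ s, replicate (f i) i) = if b ∈ s then f b else 0 := by
  simp [count_sum', count_replicate]

noncomputable def equivFinsuppAntidiag (s : Finset β) (wt : β → ℕ) (hwt : ∀ b ∈ s, 0 < wt b)
    (N : ℕ) : {m : Multiset β // (∀ b ∈ m, b ∈ s) ∧ (m.map wt).sum = N} ≃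
      {l // l ∈ (s.finsuppAntidiag N).filter fun l => ∀ b ∈ s, wt b ∣ l b} where
  toFun m := ⟨wt • toFinsupp m.1, by
    refine Finset.mem_filter.mpr ⟨Finset.mem_finsuppAntidiag.mpr ⟨?_, fun b hb => ?_⟩, ?_⟩
    · exact (sum_map_eq_sum_mul_count m.2.1 wt).symm.trans m.2.2
    · exact m.2.1 b (count_ne_zero.mp (right_ne_zero_of_mul (Finsupp.mem_support_iff.mp hb)))
    · simp⟩
  invFun l := ⟨∑ b ∈ s, replicate (l.1 b / wt b) b, by
    have hmem : ∀ b ∈ ∑ b ∈ s, replicate (l.1 b / wt b) b, b ∈ s := fun b hb => by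
      obtain ⟨i, hi, hb⟩ := mem_sum.mp hb
      exact (eq_of_mem_replicate hb).symm ▸ hi
    obtain ⟨hl, hdvd⟩ := Finset.mem_filter.mp l.2
    refine ⟨hmem, ?_⟩
    refine (sum_map_eq_sum_mul_count hmem wt).trans
      (Eq.trans (Finset.sum_congr rfl fun b hb => ?_) (Finset.mem_finsuppAntidiag.mp hl).1)
    rw [count_sum_replicate, if_pos hb, Nat.mul_div_cancel' (hdvd b hb)]⟩
  left_inv m := by
    refine Subtype.ext (ext.mpr fun b => ?_)
    simp only [Finsupp.coe_pointwise_smul, smul_eq_mul, Pi.mul_apply, toFinsupp_apply,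
      count_sum_replicate]
    by_cases hb : b ∈ s
    · rw [if_pos hb, Nat.mul_div_cancel_left _ (hwt b hb)]
    · rw [if_neg hb, count_eq_zero.mpr (mt (m.2.1 b) hb)]
  right_inv l := by
    obtain ⟨hl, hdvd⟩ := Finset.mem_filter.mp l.2
    refine Subtype.ext (Finsupp.ext fun b => ?_)
    simp only [Finsupp.coe_pointwise_smul, smul_eq_mul, Pi.mul_apply, toFinsupp_apply,
      count_sum_replicate]
    by_cases hb : b ∈ s
    · rw [if_pos hb, Nat.mul_div_cancel' (hdvd b hb)]
    · rw [if_neg hb, mul_zero, eq_comm, ← Finsupp.notMem_support_iff]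
      exact fun h => hb ((Finset.mem_finsuppAntidiag.mp hl).2 h)

end Multiset

namespace PowerSeries

variable {K : Type*} [Field K] {β : Type*}

theorem inv_one_sub_X_pow_eq_mk {n : ℕ} (hn : 0 < n) :
    (1 - X ^ n : K⟦X⟧)⁻¹ = mk fun k => if n ∣ k then 1 else 0 := by
  rw [PowerSeries.inv_eq_iff_mul_eq_one (by simp [hn.ne'])]
  ext k
  rw [mul_sub, mul_one, map_sub, coeff_mul_X_pow', coeff_mk, coeff_one]
  by_cases hk : n ≤ k
  · have hk0 : k ≠ 0 := by omega
    rw [if_pos hk, coeff_mk, if_neg hk0]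
    simp only [← Nat.dvd_sub_iff_left hk dvd_rfl, sub_self]
  · rw [if_neg hk, sub_zero]
    rcases Nat.eq_zero_or_pos k with rfl | hk0
    · simp
    · have : ¬ n ∣ k := fun hd => hk (Nat.le_of_dvd hk0 hd)
      simp [hk0.ne', this]

theorem coeff_prod_inv_one_sub_X_pow [DecidableEq β] (s : Finset β) (wt : β → ℕ)
    (hwt : ∀ b ∈ s, 0 < wt b) (N : ℕ) :
    coeff N (∏ b ∈ s, (1 - X ^ wt b : K⟦X⟧)⁻¹) =
      Nat.card {m : Multiset β // (∀ b ∈ m, b ∈ s) ∧ (m.map wt).sum = N} := by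
  rw [Finset.prod_congr rfl fun b hb => inv_one_sub_X_pow_eq_mk (hwt b hb), coeff_prod]
  simp only [coeff_mk, Finset.prod_boole, Finset.sum_boole]
  rw [Nat.card_congr (Multiset.equivFinsuppAntidiag s wt hwt N), Nat.card_eq_finsetCard]

theorem coeff_prod_inv_one_sub_X_pow_pow_card (wt : β → ℕ) (hwt : ∀ b, 0 < wt b)
    (hfin : ∀ n, Finite {b // wt b = n}) (N : ℕ) :
    coeff N (∏ n ∈ Finset.Icc 1 N, ((1 - X ^ n : K⟦X⟧)⁻¹) ^ Nat.card {b // wt b = n}) =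
      Nat.card {m : Multiset β // (m.map wt).sum = N} := by
  classical
  have hfinB : (wt ⁻¹' Set.Iic N).Finite :=
    (Set.finite_Iic N).preimage' fun n _ => Set.finite_coe_iff.mp (hfin n)
  have hB : ∀ b, b ∈ hfinB.toFinset ↔ wt b ≤ N := by simp
  have hprod : ∏ n ∈ Finset.Icc 1 N, ((1 - X ^ n : K⟦X⟧)⁻¹) ^ Nat.card {b // wt b = n} =
      ∏ b ∈ hfinB.toFinset, (1 - X ^ wt b : K⟦X⟧)⁻¹ := by
    rw [← Finset.prod_fiberwise_of_maps_to (g := wt) (t := Finset.Icc 1 N)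
      fun b hb => Finset.mem_Icc.mpr ⟨hwt b, (hB b).mp hb⟩]
    refine Finset.prod_congr rfl fun n hn => ?_
    rw [Finset.prod_congr rfl fun b hb => by rw [(Finset.mem_filter.mp hb).2], Finset.prod_const,
      ← Nat.card_eq_finsetCard]
    congr 1
    refine Nat.card_congr (Equiv.subtypeEquivRight fun b => ?_)
    simp only [Finset.mem_filter, hB]
    exact ⟨fun h => ⟨h ▸ (Finset.mem_Icc.mp hn).2, h⟩, And.right⟩
  rw [hprod, coeff_prod_inv_one_sub_X_pow _ wt fun b _ => hwt b]
  congr 1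
  refine Nat.card_congr (Equiv.subtypeEquivRight fun m => ⟨And.right, fun h => ⟨fun b hb => ?_, h⟩⟩)
  exact (hB b).mpr (h ▸ Multiset.le_sum_of_mem (Multiset.mem_map_of_mem wt hb))

end PowerSeries

namespace PermSig

def toNatFun (p : PermSig) (i : ℕ) : ℕ := if h : i < p.1 then p.2 ⟨i, h⟩ else i

theorem toNatFun_of_lt (p : PermSig) {i : ℕ} (h : i < p.1) : p.toNatFun i = p.2 ⟨i, h⟩ :=
  dif_pos h

theorem toNatFun_of_le (p : PermSig) {i : ℕ} (h : p.1 ≤ i) : p.toNatFun i = i :=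
  dif_neg (not_lt.mpr h)

theorem toNatFun_lt (p : PermSig) {i : ℕ} (h : i < p.1) : p.toNatFun i < p.1 := by
  rw [toNatFun_of_lt p h]; exact Fin.isLt _

theorem toNatFun_injective (p : PermSig) : Function.Injective p.toNatFun := by
  intro i j hij
  rcases lt_or_ge i p.1 with hi | hi <;> rcases lt_or_ge j p.1 with hj | hj
  · rw [toNatFun_of_lt p hi, toNatFun_of_lt p hj] at hij
    exact congrArg Fin.val (p.2.injective (Fin.ext hij))
  · exact absurd (hij ▸ toNatFun_lt p hi) (by rw [toNatFun_of_le p hj]; omega)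
  · exact absurd (hij ▸ toNatFun_lt p hj) (by rw [toNatFun_of_le p hi]; omega)
  · rwa [toNatFun_of_le p hi, toNatFun_of_le p hj] at hij

theorem ext_toNatFun {p q : PermSig} (h : p.1 = q.1) (hf : p.toNatFun = q.toNatFun) : p = q := by
  obtain ⟨m, π⟩ := p
  obtain ⟨n, σ⟩ := q
  obtain rfl : m = n := h
  refine Sigma.ext rfl (heq_of_eq (Equiv.ext fun i => Fin.ext ?_))
  have := congrFun hf i
  rwa [toNatFun_of_lt _ i.2, toNatFun_of_lt (⟨m, σ⟩ : PermSig) i.2] at this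

theorem permDirectSum_castAdd {m n : ℕ} (f : Equiv.Perm (Fin m)) (g : Equiv.Perm (Fin n))
    (i : Fin m) : permDirectSum f g (Fin.castAdd n i) = Fin.castAdd n (f i) := by
  simp [permDirectSum, Equiv.permCongr_apply]

theorem permDirectSum_natAdd {m n : ℕ} (f : Equiv.Perm (Fin m)) (g : Equiv.Perm (Fin n))
    (i : Fin n) : permDirectSum f g (Fin.natAdd m i) = Fin.natAdd m (g i) := by
  simp [permDirectSum, Equiv.permCongr_apply]

theorem toNatFun_sigSum (p q : PermSig) (i : ℕ) :
    (sigSum p q).toNatFun i = if i < p.1 then p.toNatFun i else p.1 + q.toNatFun (i - p.1) := by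
  by_cases hi : i < p.1
  · rw [if_pos hi, toNatFun_of_lt p hi, toNatFun_of_lt _ (by simp [sigSum]; omega)]
    exact congrArg Fin.val (permDirectSum_castAdd p.2 q.2 ⟨i, hi⟩)
  rw [if_neg hi]
  by_cases hiq : i - p.1 < q.1
  · rw [toNatFun_of_lt q hiq, toNatFun_of_lt _ (by simp [sigSum]; omega)]
    have := congrArg Fin.val (permDirectSum_natAdd p.2 q.2 ⟨i - p.1, hiq⟩)
    simp only [Fin.natAdd_mk, Nat.add_sub_cancel' (not_lt.mp hi)] at this
    exact this
  · rw [toNatFun_of_le q (by omega), toNatFun_of_le _ (by simp [sigSum]; omega)]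
    omega

theorem toNatFun_one (i : ℕ) : toNatFun ⟨0, 1⟩ i = i :=
  toNatFun_of_le _ (Nat.zero_le i)

theorem sigSum_zero_one (p : PermSig) : sigSum p ⟨0, 1⟩ = p :=
  ext_toNatFun rfl <| funext fun i => by
    rw [toNatFun_sigSum, toNatFun_one]
    split_ifs with h
    · rfl
    · rw [toNatFun_of_le p (not_lt.mp h)]; omega

theorem sigSumList_cons (p : PermSig) (l : List PermSig) :
    sigSumList (p :: l) = sigSum p (sigSumList l) := by
  cases l with
  | nil => exact (sigSum_zero_one p).symm
  | cons q l => rfl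

theorem sigSum_inj_of_fst_eq {q r q' r' : PermSig} (h : sigSum q r = sigSum q' r')
    (hq : q.1 = q'.1) : q = q' ∧ r = r' := by
  have hr : r.1 = r'.1 := by have := congrArg Sigma.fst h; simp only [sigSum] at this; omega
  have hf := congrArg toNatFun h
  refine ⟨ext_toNatFun hq (funext fun i => ?_), ext_toNatFun hr (funext fun i => ?_)⟩
  · by_cases hi : i < q.1
    · simpa [toNatFun_sigSum, hi, hq ▸ hi] using congrFun hf i
    · rw [toNatFun_of_le q (not_lt.mp hi), toNatFun_of_le q' (hq ▸ not_lt.mp hi)]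
  · simpa [toNatFun_sigSum, hq] using congrFun hf (q'.1 + i)

def IsCut (p : PermSig) (k : ℕ) : Prop := ∀ i < k, p.toNatFun i < k

theorem isCut_fst (p : PermSig) : IsCut p p.1 := fun _ => p.toNatFun_lt

theorem IsCut.le_toNatFun {p : PermSig} {k : ℕ} (hc : IsCut p k) {i : ℕ} (hi : k ≤ i) :
    k ≤ p.toNatFun i := by
  by_contra! hlt
  have hinj : Function.Injective fun j : Fin k => (⟨p.toNatFun j, hc j j.2⟩ : Fin k) :=
    fun a b h => Fin.ext (p.toNatFun_injective (congrArg Fin.val h))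
  obtain ⟨j, hj⟩ := Finite.injective_iff_surjective.mp hinj ⟨_, hlt⟩
  have := p.toNatFun_injective (congrArg Fin.val hj)
  omega

theorem IsCut.exists_eq_sigSum {p : PermSig} {k : ℕ} (hc : IsCut p k) (hk : k ≤ p.1) :
    ∃ q r : PermSig, q.1 = k ∧ p = sigSum q r := by
  have hlo : ∀ j : Fin (p.1 - k), k ≤ p.toNatFun (k + j) := fun j => hc.le_toNatFun (by omega)
  have hhi : ∀ j : Fin (p.1 - k), p.toNatFun (k + j) < p.1 := fun j => p.toNatFun_lt (by omega)
  let f : Fin k → Fin k := fun j => ⟨p.toNatFun j, hc j j.2⟩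
  let g : Fin (p.1 - k) → Fin (p.1 - k) :=
    fun j => ⟨p.toNatFun (k + j) - k, by have := hlo j; have := hhi j; omega⟩
  have hf : Function.Injective f := fun a b h => Fin.ext (p.toNatFun_injective (congrArg Fin.val h))
  have hg : Function.Injective g := fun a b h => by
    have hab : p.toNatFun (k + a) - k = p.toNatFun (k + b) - k := congrArg Fin.val h
    have := p.toNatFun_injective (show p.toNatFun (k + a) = p.toNatFun (k + b) by
      have := hlo a; have := hlo b; omega)
    exact Fin.ext (by omega)
  let q : PermSig := ⟨k, .ofBijective f (Finite.injective_iff_bijective.mp hf)⟩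
  let r : PermSig := ⟨p.1 - k, .ofBijective g (Finite.injective_iff_bijective.mp hg)⟩
  refine ⟨q, r, rfl, ext_toNatFun (by simp [sigSum, q, r]; omega) (funext fun i => ?_)⟩
  rw [toNatFun_sigSum, eq_comm]
  change (if i < k then q.toNatFun i else k + r.toNatFun (i - k)) = p.toNatFun i
  split_ifs with hi
  · rw [toNatFun_of_lt q hi]; rfl
  by_cases hik : i - k < p.1 - k
  · rw [toNatFun_of_lt r hik]
    have := hlo ⟨i - k, hik⟩
    change k + (p.toNatFun (k + (i - k)) - k) = p.toNatFun i
    simp only [Nat.add_sub_cancel' (not_lt.mp hi)] at this ⊢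
    omega
  · rw [toNatFun_of_le r (not_lt.mp hik), toNatFun_of_le p (by omega)]
    omega

theorem isCut_sigSum_iff {p q : PermSig} {k : ℕ} (hk : k ≤ p.1) :
    IsCut (sigSum p q) k ↔ IsCut p k := by
  have : ∀ i < k, (sigSum p q).toNatFun i = p.toNatFun i := fun i hi => by
    rw [toNatFun_sigSum, if_pos (by omega)]
  exact forall₂_congr fun i hi => by rw [this i hi]

theorem isCut_sigSum_fst (p q : PermSig) : IsCut (sigSum p q) p.1 :=
  (isCut_sigSum_iff le_rfl).mpr (isCut_fst p)

end PermSig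

open PermSig

theorem isDecomposable_iff {n : ℕ} (π : Equiv.Perm (Fin n)) :
    IsDecomposable π ↔ ∃ q r : PermSig, 0 < q.1 ∧ 0 < r.1 ∧ (⟨n, π⟩ : PermSig) = sigSum q r := by
  constructor
  · rintro ⟨a, b, ha, hb, rfl, π₁, π₂, rfl⟩
    exact ⟨⟨a, π₁⟩, ⟨b, π₂⟩, ha, hb, rfl⟩
  · rintro ⟨q, r, hq, hr, h⟩
    obtain rfl : n = q.1 + r.1 := congrArg Sigma.fst h
    exact ⟨q.1, r.1, hq, hr, rfl, q.2, r.2, eq_of_heq (Sigma.mk.inj_iff.mp h).2⟩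

theorem isIndecomposable_iff {p : PermSig} :
    IsIndecomposable p.2 ↔ 0 < p.1 ∧ ∀ k, 0 < k → k < p.1 → ¬ IsCut p k := by
  rw [IsIndecomposable, isDecomposable_iff]
  refine and_congr Iff.rfl ⟨fun h k hk hkp hc => h ?_, fun h ⟨q, r, hq, hr, hp⟩ => ?_⟩
  · obtain ⟨q, r, rfl, hp⟩ := hc.exists_eq_sigSum hkp.le
    refine ⟨q, r, hk, ?_, hp⟩
    have := congrArg Sigma.fst hp
    simp only [sigSum] at this
    omega
  · have hsize : p.1 = q.1 + r.1 := congrArg Sigma.fst hp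
    exact h q.1 hq (by omega) (by rw [show p = sigSum q r from hp]; exact isCut_sigSum_fst q r)

def Indec.size (a : Indec) : ℕ := a.1.1

theorem Indec.size_pos (a : Indec) : 0 < a.size := a.2.1

theorem Indec.sum_map_size_pos {l : List Indec} (hl : l ≠ []) : 0 < (l.map Indec.size).sum := by
  obtain ⟨a, l, rfl⟩ := List.exists_cons_of_ne_nil hl
  exact Nat.add_pos_left a.size_pos _

def blockSum (l : List Indec) : PermSig := sigSumList (l.map Subtype.val)

theorem blockSum_cons (a : Indec) (l : List Indec) :
    blockSum (a :: l) = sigSum a.1 (blockSum l) :=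
  sigSumList_cons _ _

theorem blockSum_fst (l : List Indec) : (blockSum l).1 = (l.map Indec.size).sum := by
  induction l with
  | nil => rfl
  | cons a l ih => rw [blockSum_cons, List.map_cons, List.sum_cons, ← ih]; rfl

theorem exists_blockSum_eq (p : PermSig) : ∃ l, blockSum l = p := by
  induction hn : p.1 using Nat.strong_induction_on generalizing p with
  | _ n ih =>
  rcases Nat.eq_zero_or_pos n with rfl | hpos
  · exact ⟨[], ext_toNatFun hn.symm (funext fun i => by rw [toNatFun_of_le p (by omega)]; rfl)⟩
  classical
  -- the first block ends at the smallest positive cut point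
  have hex : ∃ k, 0 < k ∧ IsCut p k := ⟨p.1, hn ▸ hpos, isCut_fst p⟩
  obtain ⟨hk0, hkcut⟩ := Nat.find_spec hex
  obtain ⟨q, r, hq, rfl⟩ := hkcut.exists_eq_sigSum (Nat.find_le ⟨hn ▸ hpos, isCut_fst p⟩)
  have hqindec : IsIndecomposable q.2 := isIndecomposable_iff.mpr ⟨hq ▸ hk0, fun j hj hjq hjc =>
    Nat.find_min hex (hq ▸ hjq) ⟨hj, (isCut_sigSum_iff hjq.le).mpr hjc⟩⟩
  obtain ⟨l, hl⟩ := ih r.1 (by simp only [sigSum] at hn; omega) r rfl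
  exact ⟨_, (blockSum_cons ⟨q, hqindec⟩ l).trans (congrArg _ hl)⟩

theorem blockSum_fst_eq_zero_iff {l : List Indec} : (blockSum l).1 = 0 ↔ l = [] := by
  refine ⟨fun h => ?_, fun h => h ▸ rfl⟩
  by_contra hl
  exact (Indec.sum_map_size_pos hl).ne' (blockSum_fst l ▸ h)

/-- A shorter first block would be a proper cut point of the longer one. -/
theorem Indec.size_le_of_sigSum_eq {a b : Indec} {X Y : PermSig}
    (h : sigSum a.1 X = sigSum b.1 Y) : a.size ≤ b.size :=
  not_lt.mp fun hlt => (isIndecomposable_iff.mp a.2).2 b.size b.size_pos hlt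
    ((isCut_sigSum_iff hlt.le).mp (h ▸ isCut_sigSum_fst b.1 Y))

theorem blockSum_injective : Function.Injective blockSum := by
  intro l l' h
  induction l generalizing l' with
  | nil => exact (blockSum_fst_eq_zero_iff.mp (congrArg Sigma.fst h).symm).symm
  | cons a l ih =>
    cases l' with
    | nil =>
      exact absurd (blockSum_fst_eq_zero_iff.mp (congrArg Sigma.fst h)) (List.cons_ne_nil a l)
    | cons b l' =>
      rw [blockSum_cons, blockSum_cons] at h
      obtain ⟨hab, hXY⟩ := sigSum_inj_of_fst_eq h
        (le_antisymm (Indec.size_le_of_sigSum_eq h) (Indec.size_le_of_sigSum_eq h.symm))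
      rw [Subtype.ext hab, ih hXY]

noncomputable def blockSumEquiv : List Indec ≃ PermSig :=
  .ofBijective blockSum ⟨blockSum_injective, exists_blockSum_eq⟩

noncomputable def wordsOfSizeEquivPerm (N : ℕ) :
    {l : List Indec // (l.map Indec.size).sum = N} ≃ Equiv.Perm (Fin N) :=
  (blockSumEquiv.subtypeEquiv fun l => by rw [← blockSum_fst]; rfl).trans (Equiv.sigmaSubtype N)

instance finite_words_of_size (N : ℕ) : Finite {l : List Indec // (l.map Indec.size).sum = N} :=
  .of_equiv _ (wordsOfSizeEquivPerm N).symm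

theorem card_words_of_size_eq_factorial (N : ℕ) :
    Nat.card {l : List Indec // (l.map Indec.size).sum = N} = N.factorial := by
  rw [Nat.card_congr (wordsOfSizeEquivPerm N), Nat.card_perm, Nat.card_eq_fintype_card,
    Fintype.card_fin]

theorem isLyndonPermWrt_blockSum_iff (r : Indec → Indec → Prop) (l : List Indec) :
    IsLyndonPermWrt r (blockSum l).2 ↔ IsLyndonWord r l :=
  ⟨fun ⟨_, hl', hr⟩ => blockSum_injective hl' ▸ hr, fun h => ⟨l, rfl, h⟩⟩

theorem card_lyndonPerm [LinearOrder Indec] (n : ℕ) :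
    Nat.card {p : PermSig // p.1 = n ∧ IsLyndonPermWrt (· < ·) p.2} =
      Nat.card {x : LyndonWord Indec // (x.1.map Indec.size).sum = n} :=
  Nat.card_congr <| (blockSumEquiv.subtypeEquiv
    (p := fun l => IsLyndonWord (· < ·) l ∧ (l.map Indec.size).sum = n) fun l => by
    rw [and_comm, ← blockSum_fst, ← isLyndonPermWrt_blockSum_iff]; rfl).symm.trans
    (Equiv.subtypeSubtypeEquivSubtypeInter _ _).symm

/-- The power-series identity `∏_{n ≥ 1} (1 - x^n)^{-ℓ_n} = Σ_{n ≥ 0} n! x^n`, where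
`ℓ_n` is the number of Lyndon permutations of size exactly `n` with respect to any fixed
linear order on the alphabet of indecomposable permutations.  Since the factor for size
`n` does not affect coefficients of degree less than `n`, the identity is expressed
coefficientwise: the coefficient of `x^N` in `∏_{n = 1}^{N} (1 - x^n)^{-ℓ_n}` is `N!`. -/
theorem lyndon_generating_function (r : Indec → Indec → Prop)
    (hr : IsStrictTotalOrder Indec r) (ℓ : ℕ → ℕ)
    (hℓ : ∀ n, ℓ n = Nat.card {p : PermSig // p.1 = n ∧ IsLyndonPermWrt r p.2}) :
    ∀ N : ℕ,
      PowerSeries.coeff (R := ℚ) N (∏ n ∈ Finset.Icc 1 N, ((1 - PowerSeries.X ^ n)⁻¹) ^ ℓ n)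
        = (N.factorial : ℚ) := by
  intro N
  -- the `<` of this order is `r` itself, so `hℓ` counts Lyndon permutations for `(· < ·)`
  let _ : LinearOrder Indec := @linearOrderOfSTO _ r hr (Classical.decRel r)
  let wt : LyndonWord Indec → ℕ := fun x => (x.1.map Indec.size).sum
  have hfin (n : ℕ) : Finite {x // wt x = n} :=
    .of_injective (fun x => (⟨x.1.1, x.2⟩ : {l : List Indec // (l.map Indec.size).sum = n}))
      fun x y h => Subtype.ext (Subtype.ext (by simpa using congrArg Subtype.val h))
  simp_rw [fun n => (hℓ n).trans (card_lyndonPerm n)]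
  rw [PowerSeries.coeff_prod_inv_one_sub_X_pow_pow_card wt
      (fun x => Indec.sum_map_size_pos x.2.1) hfin,
    LyndonWord.card_multisets_eq_card_words, card_words_of_size_eq_factorial]
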